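/- arXiv:2309.08841 — 2 statements merged into one kernel-verified Lean document; each statement's English description precedes it below -/
import Mathlib

section
/- For every n ≥ 1 and every z, Σ_{t=1}^{n} S_n(t)·z^t = z^n + Σ_{m=1}^{n-1} ((n-m)/(n·m!))·z^{n-m}·(1-z)^{m-1}, where S_n(t) := Σ_{k=1}^{t} A(n,k)/n!. -/
open Finset Filter

/-- Sequence A000255: A(0)=A(1)=1, A(n)=n·A(n-1)+(n-1)·A(n-2). -/
def A : ℕ → ℕ
  | 0 => 1
  | 1 => 1
  | n + 2 => (n + 2) * A (n + 1) + (n + 1) * A n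

/-- A(n,k) := C(n-1,k-1)·A(k-1). -/
def Ank (n k : ℕ) : ℕ := Nat.choose (n - 1) (k - 1) * A (k - 1)

/-!
The binomial transform of `A` is the factorial, `∑_{i≤q} C(q,i)·A(i) = (q+1)!`, by the recurrence,
Pascal's rule and `i·C(q+1,i) = (q+1)·C(q,i-1)`. Expanding a combination of the Bernstein
polynomials `z^q·(1-z)^(N-q)` whose coefficients are binomial transforms gives back the monomials,
so for `n = N + 1` this yields `∑_k A(n,k)/n!·z^k = ∑_{m<n} (n-m)/(n·m!)·z^(n-m)·(1-z)^m`, and at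
`z = 1` that `S_n(n) = 1`. Multiplied by `1 - z`, both sides of the theorem become this polynomial
minus `z^(n+1)` (Abel summation on the left); as both are continuous in `z`, `1 - z` cancels.
-/

theorem A_succ (n : ℕ) : A (n + 1) = (n + 1) * A n + n * A (n - 1) := by
  cases n <;> rfl

section BinomialTransform

variable {R : Type*} [CommSemiring R]

def binomialTransform (b : ℕ → R) (q : ℕ) : R :=
  ∑ i ∈ range (q + 1), (q.choose i : R) * b i

theorem binomialTransform_succ (b : ℕ → R) (q : ℕ) :
    binomialTransform b (q + 1) =
      binomialTransform b q + binomialTransform (fun i => b (i + 1)) q :=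
  sum_choose_succ_mul (fun i _ => b i) q

theorem sum_choose_mul_binomialTransform_mul_pow_mul_pow (b : ℕ → R) (N : ℕ) (x y : R) :
    ∑ q ∈ range (N + 1), (N.choose q : R) * binomialTransform b q * x ^ q * y ^ (N - q) =
      ∑ i ∈ range (N + 1), (N.choose i : R) * b i * x ^ i * (x + y) ^ (N - i) := by
  have hswap := sum_comm' (s := range (N + 1)) (t := fun q => range (q + 1)) (t' := range (N + 1))
    (s' := fun i => Icc i N)
    (f := fun q i => (N.choose q : R) * (q.choose i) * b i * x ^ q * y ^ (N - q))
    (fun q i => by simp only [mem_range, mem_Icc]; omega)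
  simp only [binomialTransform, mul_sum, sum_mul]
  refine (sum_congr rfl fun q _ => sum_congr rfl fun i _ => by ring).trans (hswap.trans ?_)
  refine sum_congr rfl fun i hi => ?_
  have hiN : i ≤ N := Nat.lt_succ_iff.mp (mem_range.mp hi)
  rw [add_pow, mul_sum, ← Ico_add_one_right_eq_Icc, sum_Ico_eq_sum_range,
    show N + 1 - i = N - i + 1 by omega]
  refine sum_congr rfl fun r hr => ?_
  have hr : r ≤ N - i := Nat.lt_succ_iff.mp (mem_range.mp hr)
  rw [show N - (i + r) = N - i - r by omega, ← Nat.cast_mul, Nat.choose_mul (by omega),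
    Nat.add_sub_cancel_left]
  push_cast
  ring

theorem binomialTransform_add (b c : ℕ → R) (q : ℕ) :
    binomialTransform (fun i => b i + c i) q = binomialTransform b q + binomialTransform c q := by
  simp only [binomialTransform, mul_add, sum_add_distrib]

theorem binomialTransform_natCast_mul_succ (b : ℕ → R) (q : ℕ) :
    binomialTransform (fun i => (i : R) * b i) (q + 1) =
      (q + 1) * binomialTransform (fun i => b (i + 1)) q := by
  rw [binomialTransform, sum_range_succ', binomialTransform, mul_sum]
  simp only [Nat.cast_zero, zero_mul, mul_zero, add_zero]
  refine sum_congr rfl fun i _ => ?_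
  rw [← mul_assoc, ← mul_assoc, ← Nat.cast_succ, ← Nat.cast_mul, ← Nat.cast_mul,
    Nat.add_one_mul_choose_eq]

theorem binomialTransform_A_succ (q : ℕ) :
    binomialTransform (fun i => (A (i + 1) : R)) q =
      (q + 1) * binomialTransform (fun i => (A i : R)) q := by
  cases q with
  | zero => simp [binomialTransform, A]
  | succ q =>
    have hrec : (fun i => (A (i + 1) : R)) =
        fun i => (A i : R) + ((i : R) * A i + (i : R) * A (i - 1)) := by
      funext i
      rw [A_succ]
      push_cast
      ring
    rw [hrec, binomialTransform_add, binomialTransform_add, binomialTransform_natCast_mul_succ,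
      binomialTransform_natCast_mul_succ, ← mul_add]
    simp only [Nat.add_sub_cancel]
    rw [add_comm (binomialTransform _ q), ← binomialTransform_succ]
    push_cast
    ring

theorem binomialTransform_A (q : ℕ) :
    binomialTransform (fun i => (A i : R)) q = (q + 1).factorial := by
  induction q with
  | zero => simp [binomialTransform, A]
  | succ q ih =>
    rw [binomialTransform_succ, binomialTransform_A_succ, ih, Nat.factorial_succ (q + 1)]
    push_cast
    ring

end BinomialTransform

theorem sum_choose_mul_A_mul_pow {R : Type*} [CommRing R] (N : ℕ) (z : R) :
    ∑ i ∈ range (N + 1), (N.choose i : R) * A i * z ^ i =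
      ∑ q ∈ range (N + 1),
        (N.choose q : R) * (q + 1).factorial * z ^ q * (1 - z) ^ (N - q) := by
  have h := sum_choose_mul_binomialTransform_mul_pow_mul_pow (fun i => (A i : R)) N z (1 - z)
  simp only [binomialTransform_A, add_sub_cancel, one_pow, mul_one] at h
  exact h.symm

theorem sum_Ank_div_factorial_mul_pow {K : Type*} [Field K] [CharZero K] (n : ℕ) (z : K) :
    ∑ k ∈ Icc 1 n, (Ank n k : K) / n.factorial * z ^ k =
      ∑ m ∈ range n, ((n - m : ℕ) : K) / (n * m.factorial) * z ^ (n - m) * (1 - z) ^ m := by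
  obtain _ | N := n
  · simp
  have hlhs : ∑ k ∈ Icc 1 (N + 1), (Ank (N + 1) k : K) / (N + 1).factorial * z ^ k =
      z / (N + 1).factorial * ∑ i ∈ range (N + 1), (N.choose i : K) * A i * z ^ i := by
    rw [← Ico_add_one_right_eq_Icc, range_eq_Ico, mul_sum, ← sum_Ico_add' _ 0 (N + 1) 1]
    refine sum_congr rfl fun i _ => ?_
    simp only [Ank, Nat.add_sub_cancel]
    push_cast
    ring
  have hrhs : ∑ m ∈ range (N + 1), ((N + 1 - m : ℕ) : K) / ((N + 1 : ℕ) * m.factorial) *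
      z ^ (N + 1 - m) * (1 - z) ^ m =
      ∑ q ∈ range (N + 1), ((q + 1 : ℕ) : K) / ((N + 1 : ℕ) * (N - q).factorial) *
      z ^ (q + 1) * (1 - z) ^ (N - q) := by
    rw [← sum_range_reflect]
    refine sum_congr rfl fun q hq => ?_
    have hq : q ≤ N := Nat.lt_succ_iff.mp (mem_range.mp hq)
    rw [show N + 1 - 1 - q = N - q by omega, show N + 1 - (N - q) = q + 1 by omega]
  rw [hlhs, hrhs, sum_choose_mul_A_mul_pow, mul_sum]
  refine sum_congr rfl fun q hq => ?_
  have hq : q ≤ N := Nat.lt_succ_iff.mp (mem_range.mp hq)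
  have hfac : (N.choose q : K) * q.factorial * (N - q).factorial = N.factorial := by
    exact_mod_cast Nat.choose_mul_factorial_mul_factorial hq
  have hchoose : (N.choose q : K) ≠ 0 := Nat.cast_ne_zero.mpr (Nat.choose_pos hq).ne'
  have hqfac : (q.factorial : K) ≠ 0 := Nat.cast_ne_zero.mpr q.factorial_ne_zero
  rw [Nat.factorial_succ, Nat.factorial_succ, Nat.cast_mul, ← hfac]
  push_cast
  field_simp
  ring

theorem sum_Ank_div_factorial {K : Type*} [Field K] [CharZero K] (n : ℕ) (hn : 1 ≤ n) :
    ∑ k ∈ Icc 1 n, (Ank n k : K) / n.factorial = 1 := by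
  obtain ⟨N, rfl⟩ : ∃ N, n = N + 1 := ⟨n - 1, by omega⟩
  simpa [sum_range_succ', div_self, Nat.cast_add_one_ne_zero] using
    sum_Ank_div_factorial_mul_pow (K := K) (N + 1) 1

theorem one_sub_mul_sum_Icc_partial_sum_mul_pow {R : Type*} [CommRing R] (a : ℕ → R) (n : ℕ)
    (z : R) :
    (1 - z) * ∑ t ∈ Icc 1 n, (∑ k ∈ Icc 1 t, a k) * z ^ t =
      ∑ k ∈ Icc 1 n, a k * z ^ k - (∑ k ∈ Icc 1 n, a k) * z ^ (n + 1) := by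
  induction n with
  | zero => simp
  | succ n ih =>
    rw [sum_Icc_succ_top (by omega), sum_Icc_succ_top (by omega), sum_Icc_succ_top (by omega)]
    linear_combination ih

theorem one_sub_mul_pow_add_sum_Icc {K : Type*} [Field K] [CharZero K] (n : ℕ) (hn : 1 ≤ n)
    (z : K) :
    (1 - z) * (z ^ n + ∑ m ∈ Icc 1 (n - 1),
        ((n - m : ℕ) : K) / (n * m.factorial) * z ^ (n - m) * (1 - z) ^ (m - 1)) =
      ∑ m ∈ range n, ((n - m : ℕ) : K) / (n * m.factorial) * z ^ (n - m) * (1 - z) ^ m -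
        z ^ (n + 1) := by
  obtain ⟨N, rfl⟩ : ∃ N, n = N + 1 := ⟨n - 1, by omega⟩
  have hN : (N + 1 : K) ≠ 0 := Nat.cast_add_one_ne_zero N
  rw [sum_range_succ', Nat.add_sub_cancel, ← Ico_add_one_right_eq_Icc, ← sum_Ico_add' _ 0 N 1,
    ← range_eq_Ico, mul_add, mul_sum]
  simp only [Nat.add_sub_cancel, Nat.sub_zero, Nat.factorial_zero, pow_zero, pow_succ]
  push_cast
  field_simp
  ring

theorem eq_of_one_sub_mul_eq {f g : ℝ → ℝ} (hf : Continuous f) (hg : Continuous g)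
    (h : ∀ w, (1 - w) * f w = (1 - w) * g w) : f = g :=
  Continuous.ext_on (dense_compl_singleton 1) hf hg fun w hw =>
    mul_left_cancel₀ (sub_ne_zero.mpr (Ne.symm hw)) (h w)

theorem stmt11 (n : ℕ) (hn : 1 ≤ n) (z : ℝ) :
    ∑ t ∈ Finset.Icc 1 n,
        (∑ k ∈ Finset.Icc 1 t, (Ank n k : ℝ) / (Nat.factorial n)) * z ^ t =
      z ^ n + ∑ m ∈ Finset.Icc 1 (n - 1),
        ((n - m : ℕ) : ℝ) / (n * Nat.factorial m) * z ^ (n - m) * (1 - z) ^ (m - 1) := by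
  revert z
  refine congrFun (eq_of_one_sub_mul_eq (by fun_prop) (by fun_prop) fun w => ?_)
  rw [one_sub_mul_sum_Icc_partial_sum_mul_pow, sum_Ank_div_factorial n hn, one_mul,
    sum_Ank_div_factorial_mul_pow, one_sub_mul_pow_add_sum_Icc n hn]
end

section
/- For every n ≥ 1, Σ_{t=1}^{n} S_n(t) = 2 − 1/n, where S_n(t) := Σ_{k=1}^{t} A(n,k)/n!. -/
open Finset Filter

open scoped Nat

/-!
Write `D` for the derangement numbers. Then `A n = D n + D (n + 1)`, and the classical identities
`∑ j, C(m, j) D(j) = m!` and `∑ j, C(m, j) D(j + 1) = m · m!` give `∑ j, C(m, j) A(j) = (m + 1)!`.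
Exchanging the order of summation turns the double sum into `(1 / n!) ∑ k, (n + 1 - k) A(n, k)`,
and `(m + 2 - j) C(m + 1, j) = (m + 1) C(m, j) + C(m + 1, j)` reduces this weighted sum to two
instances of the previous identity.
-/

theorem A_eq_numDerangements_add (n : ℕ) :
    A n = numDerangements n + numDerangements (n + 1) := by
  induction n using Nat.twoStepInduction with
  | zero => decide
  | one => decide
  | more n ih₁ ih₂ =>
    rw [A, ih₁, ih₂, numDerangements_add_two (n + 1), numDerangements_add_two n]
    ring

theorem sum_Icc_sum_Icc_eq_sum_nsmul {M : Type*} [AddCommMonoid M] (g : ℕ → M) (a n : ℕ) :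
    ∑ t ∈ Icc a n, ∑ k ∈ Icc a t, g k = ∑ k ∈ Icc a n, (n + 1 - k) • g k := by
  rw [sum_comm' (t' := Icc a n) (s' := fun k => Icc k n) (fun t k => by simp only [mem_Icc]; omega)]
  simp only [sum_const, Nat.card_Icc]

section BinomialTransform

variable {R : Type*} [CommSemiring R] (f : ℕ → R)

theorem sum_range_choose_succ_mul (m : ℕ) :
    ∑ j ∈ range (m + 2), ((m + 1).choose j : R) * f j =
      ∑ j ∈ range (m + 1), (m.choose j : R) * f j +
        ∑ j ∈ range (m + 1), (m.choose j : R) * f (j + 1) :=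
  sum_choose_succ_mul (fun j _ => f j) m

theorem sum_range_mul_choose_succ_mul (m : ℕ) :
    ∑ j ∈ range (m + 2), (j : R) * (m + 1).choose j * f j =
      (m + 1) * ∑ j ∈ range (m + 1), (m.choose j : R) * f (j + 1) := by
  rw [sum_range_succ', Nat.cast_zero, zero_mul, zero_mul, add_zero, mul_sum]
  refine sum_congr rfl fun j _ => ?_
  have h := congrArg (Nat.cast : ℕ → R) (Nat.add_one_mul_choose_eq m j)
  push_cast at h ⊢
  rw [← mul_assoc, h]
  ring

end BinomialTransform

theorem sum_choose_mul_numDerangements (m : ℕ) :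
    ∑ j ∈ range (m + 1), (m.choose j * numDerangements j : ℤ) = m ! ∧
      ∑ j ∈ range (m + 1), (m.choose j * numDerangements (j + 1) : ℤ) = m * m ! := by
  induction m with
  | zero => simp
  | succ m ih =>
    obtain ⟨hS, hT⟩ := ih
    have hS' : ∑ j ∈ range (m + 2), ((m + 1).choose j * numDerangements j : ℤ) = (m + 1)! := by
      rw [sum_range_choose_succ_mul, hS, hT, Nat.factorial_succ]
      push_cast
      ring
    refine ⟨hS', ?_⟩
    have hD : ∀ j, ((m + 1).choose j * numDerangements (j + 1) : ℤ) =
        j * (m + 1).choose j * numDerangements j + (m + 1).choose j * numDerangements j -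
          (-1) ^ j * (m + 1).choose j := by
      intro j
      rw [numDerangements_succ]
      ring
    simp only [hD, sum_sub_distrib, sum_add_distrib, sum_range_mul_choose_succ_mul, hT, hS',
      Int.alternating_sum_range_choose_of_ne m.succ_ne_zero, Nat.factorial_succ]
    push_cast
    ring

theorem sum_choose_mul_A (m : ℕ) : ∑ j ∈ range (m + 1), m.choose j * A j = (m + 1)! := by
  have h := sum_choose_mul_numDerangements m
  zify
  simp only [A_eq_numDerangements_add, Nat.cast_add, mul_add, sum_add_distrib, h.1, h.2,
    Nat.factorial_succ]
  push_cast
  ring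

theorem sum_sub_mul_choose_mul_A (m : ℕ) :
    ∑ j ∈ range (m + 1), (m + 1 - j) * (m.choose j * A j) = (m + 1)! + m * m ! := by
  cases m with
  | zero => decide
  | succ m =>
    have hsplit : ∀ j ∈ range (m + 2), (m + 2 - j) * ((m + 1).choose j * A j) =
        (m + 1) * (m.choose j * A j) + (m + 1).choose j * A j := by
      intro j hj
      have hj : j ≤ m + 1 := Nat.lt_succ_iff.mp (mem_range.mp hj)
      rw [show m + 2 - j = (m + 1 - j) + 1 by omega, add_one_mul, ← mul_assoc,
        mul_comm _ ((m + 1).choose j), ← Nat.choose_mul_succ_eq]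
      ring
    have hlast : ∑ j ∈ range (m + 2), m.choose j * A j = (m + 1)! := by
      rw [sum_range_succ, Nat.choose_succ_self, sum_choose_mul_A]
      simp
    rw [sum_congr rfl hsplit, sum_add_distrib, ← mul_sum, hlast, sum_choose_mul_A,
      Nat.factorial_succ (m + 1)]
    ring

theorem sum_Icc_sub_mul_Ank (m : ℕ) :
    ∑ k ∈ Icc 1 (m + 1), (m + 2 - k) * Ank (m + 1) k = (m + 1)! + m * m ! := by
  rw [← Ico_add_one_right_eq_Icc, sum_Ico_eq_sum_range, ← sum_sub_mul_choose_mul_A]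
  refine sum_congr (by simp) fun j _ => ?_
  simp only [Ank, Nat.add_sub_cancel, Nat.add_sub_cancel_left]
  congr 1
  omega

theorem stmt12 (n : ℕ) (hn : 1 ≤ n) :
    ∑ t ∈ Finset.Icc 1 n,
        (∑ k ∈ Finset.Icc 1 t, (Ank n k : ℝ) / (Nat.factorial n)) =
      2 - 1 / n := by
  obtain ⟨m, rfl⟩ : ∃ m, n = m + 1 := ⟨n - 1, by omega⟩
  rw [sum_Icc_sum_Icc_eq_sum_nsmul]
  simp only [nsmul_eq_mul, ← mul_div_assoc, ← sum_div, ← Nat.cast_mul, ← Nat.cast_sum,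
    sum_Icc_sub_mul_Ank]
  push_cast [Nat.factorial_succ]
  field_simp
  ring
end
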